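/- arXiv:1711.01516 — 3 statements merged into one kernel-verified Lean document; each statement's English description precedes it below -/
import Mathlib

section
/- Suppose a multiplicative function f: ℕ → {−1, 0, 1} satisfies: for every Dirichlet character ε mod q, the Dirichlet series G_ε(z) = ∑_{n≥1} f(n)ε(n)/n^z satisfies log G_ε(z) = ∑_{p prime} f(p)ε(p)/p^z + g(z) with g holomorphic on Re(z) > 1/2, and for each root of unity ξ ∈ Im ε the sets {p : ε(p) = ξ, f(p) = 1} and {p : ε(p) = ξ, f(p) = −1} are regular sets of primes of equal density 1/(2#Im ε). Then for every d coprime to q, the Dirichlet series F(z) = ∑_{n ≡ d mod q} f(n)/n^z extends holomorphically to Re(z) ≥ 1. -/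
open Filter Topology Set Complex

/-!
Grouping the primes by the value `ξ = ε(p)` and the sign of `f(p)` writes the prime sum in
`log G_ε` as `∑_ξ ξ (P⁺_ξ(z) - P⁻_ξ(z))` with `P^±_ξ(z) = ∑_{ε(p) = ξ, f(p) = ±1} p^{-z}`. These two
sets of primes are regular of the same density, so the logarithmic singularities of `P⁺_ξ` and
`P⁻_ξ` at `z = 1` cancel. Hence each `G_ε = exp (log G_ε)` continues holomorphically to
`Re z ≥ 1`, and so does `F = φ(q)⁻¹ ∑_ε ε(d)⁻¹ G_ε` by orthogonality of characters.
-/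

def HasAnalyticExtension (U V : Set ℂ) (A : ℂ → ℂ) : Prop :=
  ∃ H : ℂ → ℂ, AnalyticOnNhd ℂ H U ∧ EqOn A H V

namespace HasAnalyticExtension

variable {U V : Set ℂ} {A B : ℂ → ℂ}

lemma of_analyticOnNhd (hA : AnalyticOnNhd ℂ A U) : HasAnalyticExtension U V A :=
  ⟨A, hA, eqOn_refl A V⟩

lemma congr (hA : HasAnalyticExtension U V A) (hAB : EqOn A B V) : HasAnalyticExtension U V B :=
  let ⟨H, hH, hAH⟩ := hA
  ⟨H, hH, hAB.symm.trans hAH⟩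

lemma add (hA : HasAnalyticExtension U V A) (hB : HasAnalyticExtension U V B) :
    HasAnalyticExtension U V (fun z => A z + B z) :=
  let ⟨H, hH, hAH⟩ := hA
  let ⟨K, hK, hBK⟩ := hB
  ⟨fun z => H z + K z, hH.add hK, fun z hz => by simp only [hAH hz, hBK hz]⟩

lemma const_mul (hA : HasAnalyticExtension U V A) (c : ℂ) :
    HasAnalyticExtension U V (fun z => c * A z) :=
  let ⟨H, hH, hAH⟩ := hA
  ⟨fun z => c * H z, analyticOnNhd_const.mul hH, fun z hz => by simp only [hAH hz]⟩

lemma exp (hA : HasAnalyticExtension U V A) :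
    HasAnalyticExtension U V (fun z => Complex.exp (A z)) :=
  let ⟨H, hH, hAH⟩ := hA
  ⟨fun z => Complex.exp (H z), hH.cexp, fun z hz => by simp only [hAH hz]⟩

lemma sum {ι : Type*} {s : Finset ι} {A : ι → ℂ → ℂ}
    (hA : ∀ i ∈ s, HasAnalyticExtension U V (A i)) :
    HasAnalyticExtension U V (fun z => ∑ i ∈ s, A i z) := by
  classical
  induction s using Finset.induction_on with
  | empty => exact of_analyticOnNhd (by simpa using analyticOnNhd_const)
  | insert i s hi ih =>
    simp_rw [Finset.sum_insert hi]
    exact (hA i (s.mem_insert_self i)).add (ih fun j hj => hA j (Finset.mem_insert_of_mem hj))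

lemma sub_of_eq_add {L h₁ h₂ : ℂ → ℂ} (h₁_an : AnalyticOnNhd ℂ h₁ U)
    (h₂_an : AnalyticOnNhd ℂ h₂ U) (hA : ∀ z ∈ V, A z = L z + h₁ z)
    (hB : ∀ z ∈ V, B z = L z + h₂ z) : HasAnalyticExtension U V (fun z => A z - B z) :=
  ⟨fun z => h₁ z - h₂ z, h₁_an.sub h₂_an, fun z hz => by simp only [hA z hz, hB z hz]; ring⟩

end HasAnalyticExtension

lemma sign_mul_mul_eq_sum {T : Finset ℂ} {x : ℝ} (hx : x ∈ ({-1, 0, 1} : Set ℝ)) {y : ℂ}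
    (hy : y ∉ T → y = 0) (w : ℂ) :
    x * y * w =
      ∑ ξ ∈ T, ξ * ((if y = ξ ∧ x = 1 then w else 0) - if y = ξ ∧ x = -1 then w else 0) := by
  by_cases hyT : y ∈ T
  · rcases hx with rfl | rfl | rfl <;> norm_num [mul_ite, Finset.sum_ite_eq, hyT]
  · rcases hx with rfl | rfl | rfl <;> norm_num [mul_ite, Finset.sum_ite_eq, hyT, hy hyT]

lemma tsum_sign_mul_mul_eq_sum {α : Type*} {P : α → Prop} {s : α → ℝ}
    (hs : ∀ a, s a ∈ ({-1, 0, 1} : Set ℝ)) {c : α → ℂ} {T : Finset ℂ} (hc : ∀ a, c a ∉ T → c a = 0)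
    {w : α → ℂ} (hw : Summable w) :
    ∑' a : {a // P a}, (s a : ℂ) * c a * w a =
      ∑ ξ ∈ T, ξ * (∑' a : {a | P a ∧ c a = ξ ∧ s a = 1}, w a -
        ∑' a : {a | P a ∧ c a = ξ ∧ s a = -1}, w a) := by
  classical
  calc ∑' a : {a // P a}, (s a : ℂ) * c a * w a
      = ∑' a, {a | P a}.indicator (fun a => (s a : ℂ) * c a * w a) a :=
        tsum_subtype {a | P a} fun a => (s a : ℂ) * c a * w a
    _ = ∑' a, ∑ ξ ∈ T, ξ * ({a | P a ∧ c a = ξ ∧ s a = 1}.indicator w a -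
          {a | P a ∧ c a = ξ ∧ s a = -1}.indicator w a) := by
        refine tsum_congr fun a => ?_
        by_cases ha : P a
        · simp only [indicator_apply, mem_ofPred_eq, ha, true_and, if_true]
          exact sign_mul_mul_eq_sum (hs a) (hc a) (w a)
        · simp [ha]
    _ = ∑ ξ ∈ T, ∑' a, ξ * ({a | P a ∧ c a = ξ ∧ s a = 1}.indicator w a -
          {a | P a ∧ c a = ξ ∧ s a = -1}.indicator w a) :=
        Summable.tsum_finsetSum fun ξ _ => ((hw.indicator _).sub (hw.indicator _)).mul_left ξ
    _ = _ := Finset.sum_congr rfl fun ξ _ => by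
        rw [tsum_mul_left, Summable.tsum_sub (hw.indicator _) (hw.indicator _), ← tsum_subtype,
          ← tsum_subtype]

lemma LSeries_eq_tsum_div_cpow (c : ℕ → ℂ) {z : ℂ} (hz : z ≠ 0) :
    LSeries c z = ∑' n : ℕ, c n / (n : ℂ) ^ z := by
  simp only [LSeries, LSeries.term_of_ne_zero' hz]

lemma summable_natCast_cpow_neg {z : ℂ} (hz : 1 < z.re) :
    Summable fun n : ℕ => (n : ℂ) ^ (-z) := by
  simpa only [cpow_neg, one_div] using Complex.summable_one_div_nat_cpow.mpr hz

section ResidueClass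

variable {q : ℕ} [NeZero q] {c : ℕ → ℂ} {m : ℝ} {a : ZMod q}

lemma LSeries_indicator_eq_sum_twist (hc : ∀ n, ‖c n‖ ≤ m) (ha : IsUnit a) {s : ℂ}
    (hs : 1 < s.re) :
    LSeries ({n : ℕ | (n : ZMod q) = a}.indicator c) s =
      (q.totient : ℂ)⁻¹ * ∑ χ : DirichletCharacter ℂ q, χ a⁻¹ * LSeries (fun n => c n * χ n) s := by
  have hsum (χ : DirichletCharacter ℂ q) : LSeriesSummable (fun n => c n * χ n) s :=
    LSeriesSummable_of_bounded_of_one_lt_re (m := m) (fun n _ => by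
      rw [norm_mul]
      exact (mul_le_of_le_one_right (norm_nonneg _) (χ.norm_le_one _)).trans (hc n)) hs
  simp_rw [← LSeries_smul, ← LSeries_sum fun χ _ => (hsum χ).smul _, ← LSeries_smul]
  refine LSeries_congr (fun {n} _ => ?_) s
  have htot : (q.totient : ℂ) ≠ 0 := by exact_mod_cast (Nat.totient_pos.mpr q.pos_of_neZero).ne'
  simp only [Pi.smul_apply, Finset.sum_apply, smul_eq_mul, indicator_apply, mem_ofPred_eq]
  simp_rw [mul_left_comm _ (c n), ← Finset.mul_sum,
    DirichletCharacter.sum_char_inv_mul_char_eq ℂ ha, eq_comm (a := a)]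
  split_ifs
  · field_simp
  · simp

lemma hasAnalyticExtension_LSeries_indicator {U : Set ℂ} (hc : ∀ n, ‖c n‖ ≤ m) (ha : IsUnit a)
    (htwist : ∀ χ : DirichletCharacter ℂ q,
      HasAnalyticExtension U {z | 1 < z.re} (LSeries fun n => c n * χ n)) :
    HasAnalyticExtension U {z | 1 < z.re} (LSeries ({n : ℕ | (n : ZMod q) = a}.indicator c)) :=
  ((HasAnalyticExtension.sum fun χ _ => (htwist χ).const_mul (χ a⁻¹)).const_mul _).congr
    fun _ hz => (LSeries_indicator_eq_sum_twist hc ha hz).symm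

end ResidueClass

lemma hasAnalyticExtension_LSeries_twist {q : ℕ} [NeZero q] {f : ℕ → ℝ}
    (hval : ∀ n : ℕ, f n ∈ ({-1, 0, 1} : Set ℝ)) {ε : DirichletCharacter ℂ q} {g : ℂ → ℂ}
    (hg : AnalyticOnNhd ℂ g {z : ℂ | 1 / 2 < z.re})
    (hlog : ∀ z : ℂ, 1 < z.re →
      (∑' n : ℕ, (f n : ℂ) * ε (n : ZMod q) / (n : ℂ) ^ z) =
        Complex.exp ((∑' p : {p : ℕ // p.Prime}, (f p : ℂ) * ε ((p : ℕ) : ZMod q) /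
          ((p : ℕ) : ℂ) ^ z) + g z))
    (hreg : ∀ ξ ∈ {ξ : ℂ | ∃ u : (ZMod q)ˣ, ε (u : ZMod q) = ξ},
      HasAnalyticExtension {z : ℂ | 1 ≤ z.re} {z : ℂ | 1 < z.re} fun z =>
        (∑' p : {p : ℕ | p.Prime ∧ ε (p : ZMod q) = ξ ∧ f p = 1}, ((p : ℕ) : ℂ) ^ (-z)) -
          ∑' p : {p : ℕ | p.Prime ∧ ε (p : ZMod q) = ξ ∧ f p = -1}, ((p : ℕ) : ℂ) ^ (-z)) :
    HasAnalyticExtension {z : ℂ | 1 ≤ z.re} {z : ℂ | 1 < z.re}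
      (LSeries fun n => (f n : ℂ) * ε (n : ZMod q)) := by
  classical
  set T := Finset.univ.image fun u : (ZMod q)ˣ => ε (u : ZMod q)
  have hT (ξ : ℂ) : ξ ∈ T ↔ ∃ u : (ZMod q)ˣ, ε (u : ZMod q) = ξ := by simp [T]
  have hε (n : ℕ) (hn : ε (n : ZMod q) ∉ T) : ε (n : ZMod q) = 0 :=
    ε.map_nonunit fun hu => hn ((hT _).2 ⟨hu.unit, by rw [hu.unit_spec]⟩)
  have hU : {z : ℂ | 1 ≤ z.re} ⊆ {z : ℂ | 1 / 2 < z.re} := fun z (hz : 1 ≤ z.re) =>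
    show 1 / 2 < z.re by linarith
  refine (((HasAnalyticExtension.sum fun ξ hξ => (hreg ξ ((hT ξ).1 hξ)).const_mul ξ).add
    (.of_analyticOnNhd (hg.mono hU))).exp).congr fun z (hz : 1 < z.re) => ?_
  rw [LSeries_eq_tsum_div_cpow _ (ne_zero_of_one_lt_re hz), hlog z hz]
  simp_rw [div_eq_mul_inv, ← cpow_neg]
  rw [tsum_sign_mul_mul_eq_sum hval hε (summable_natCast_cpow_neg hz)]

theorem progression_series_analytic_general
    (q : ℕ) [NeZero q] (f : ℕ → ℝ)
    (hval : ∀ n : ℕ, f n ∈ ({-1, 0, 1} : Set ℝ))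
    (hlog : ∀ ε : DirichletCharacter ℂ q, ∃ g : ℂ → ℂ,
      AnalyticOnNhd ℂ g {z : ℂ | 1 / 2 < z.re} ∧
      ∀ z : ℂ, 1 < z.re →
        (∑' n : ℕ, (f n : ℂ) * ε (n : ZMod q) / (n : ℂ) ^ z) =
          Complex.exp
            ((∑' p : {p : ℕ // p.Prime}, (f p : ℂ) * ε ((p : ℕ) : ZMod q) /
                ((p : ℕ) : ℂ) ^ z) + g z))
    (hreg : ∀ ε : DirichletCharacter ℂ q,
      ∀ ξ ∈ {ξ : ℂ | ∃ u : (ZMod q)ˣ, ε (u : ZMod q) = ξ},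
      (∃ h : ℂ → ℂ, AnalyticOnNhd ℂ h {z : ℂ | 1 ≤ z.re} ∧
        ∀ z : ℂ, 1 < z.re →
          ∑' p : {p : ℕ | p.Prime ∧ ε (p : ZMod q) = ξ ∧ f p = 1}, ((p : ℕ) : ℂ) ^ (-z) =
            (1 / (2 * ({ξ : ℂ | ∃ u : (ZMod q)ˣ, ε (u : ZMod q) = ξ}.ncard : ℝ)) : ℝ) *
              Complex.log (1 / (z - 1)) + h z) ∧
      (∃ h : ℂ → ℂ, AnalyticOnNhd ℂ h {z : ℂ | 1 ≤ z.re} ∧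
        ∀ z : ℂ, 1 < z.re →
          ∑' p : {p : ℕ | p.Prime ∧ ε (p : ZMod q) = ξ ∧ f p = -1}, ((p : ℕ) : ℂ) ^ (-z) =
            (1 / (2 * ({ξ : ℂ | ∃ u : (ZMod q)ˣ, ε (u : ZMod q) = ξ}.ncard : ℝ)) : ℝ) *
              Complex.log (1 / (z - 1)) + h z)) :
    ∀ d : ℕ, Nat.Coprime d q →
      ∃ F : ℂ → ℂ, AnalyticOnNhd ℂ F {z : ℂ | 1 ≤ z.re} ∧
        ∀ z : ℂ, 1 < z.re →
          F z = ∑' n : {n : ℕ // n ≡ d [MOD q]}, ((f n : ℂ)) / ((n : ℕ) : ℂ) ^ z := by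
  intro d hd
  have htwist (ε : DirichletCharacter ℂ q) : HasAnalyticExtension {z : ℂ | 1 ≤ z.re}
      {z : ℂ | 1 < z.re} (LSeries fun n => (f n : ℂ) * ε (n : ZMod q)) := by
    obtain ⟨g, hg, hlogε⟩ := hlog ε
    refine hasAnalyticExtension_LSeries_twist hval hg hlogε fun ξ hξ => ?_
    obtain ⟨⟨h₁, h₁_an, h₁_eq⟩, ⟨h₂, h₂_an, h₂_eq⟩⟩ := hreg ε ξ hξ
    exact .sub_of_eq_add h₁_an h₂_an h₁_eq h₂_eq
  have hbound (n : ℕ) : ‖(f n : ℂ)‖ ≤ 1 := by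
    obtain h | h | h : f n = -1 ∨ f n = 0 ∨ f n = 1 := hval n <;> simp [h]
  obtain ⟨F, hF, hF_eq⟩ := hasAnalyticExtension_LSeries_indicator hbound
    ((ZMod.isUnit_iff_coprime d q).mpr hd) htwist
  refine ⟨F, hF, fun z (hz : 1 < z.re) => ?_⟩
  rw [← hF_eq hz, LSeries_eq_tsum_div_cpow _ (ne_zero_of_one_lt_re hz)]
  refine (tsum_congr fun n => ?_).trans
    (tsum_subtype {n : ℕ | n ≡ d [MOD q]} fun n => (f n : ℂ) / (n : ℂ) ^ z).symm
  simp only [indicator_apply, mem_ofPred_eq, ZMod.natCast_eq_natCast_iff, ite_div, zero_div]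

/-- If each twisted Dirichlet series `G_ε(z) = ∑ f(n)ε(n)/n^z` has a logarithm of the form
`∑_p f(p)ε(p)/p^z + g(z)` with `g` holomorphic on `Re z > 1/2`, and for each `ξ ∈ Im ε` the
sets of primes with `ε(p) = ξ` and `f(p) = ±1` are regular of equal density `1/(2 #Im ε)`,
then for every `d` coprime to `q` the series `∑_{n ≡ d mod q} f(n)/n^z` extends
holomorphically to `Re z ≥ 1`. -/
theorem progression_series_analytic
    (q : ℕ) [NeZero q] (f : ℕ → ℝ)
    (hval : ∀ n : ℕ, f n ∈ ({-1, 0, 1} : Set ℝ))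
    (hf1 : f 1 = 1)
    (hmul : ∀ m n : ℕ, Nat.Coprime m n → f (m * n) = f m * f n)
    (hlog : ∀ ε : DirichletCharacter ℂ q, ∃ g : ℂ → ℂ,
      AnalyticOnNhd ℂ g {z : ℂ | 1 / 2 < z.re} ∧
      ∀ z : ℂ, 1 < z.re →
        (∑' n : ℕ, (f n : ℂ) * ε (n : ZMod q) / (n : ℂ) ^ z) =
          Complex.exp
            ((∑' p : {p : ℕ // p.Prime}, (f p : ℂ) * ε ((p : ℕ) : ZMod q) /
                ((p : ℕ) : ℂ) ^ z) + g z))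
    (hreg : ∀ ε : DirichletCharacter ℂ q,
      ∀ ξ ∈ {ξ : ℂ | ∃ u : (ZMod q)ˣ, ε (u : ZMod q) = ξ},
      (∃ h : ℂ → ℂ, AnalyticOnNhd ℂ h {z : ℂ | 1 ≤ z.re} ∧
        ∀ z : ℂ, 1 < z.re →
          ∑' p : {p : ℕ | p.Prime ∧ ε (p : ZMod q) = ξ ∧ f p = 1}, ((p : ℕ) : ℂ) ^ (-z) =
            (1 / (2 * ({ξ : ℂ | ∃ u : (ZMod q)ˣ, ε (u : ZMod q) = ξ}.ncard : ℝ)) : ℝ) *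
              Complex.log (1 / (z - 1)) + h z) ∧
      (∃ h : ℂ → ℂ, AnalyticOnNhd ℂ h {z : ℂ | 1 ≤ z.re} ∧
        ∀ z : ℂ, 1 < z.re →
          ∑' p : {p : ℕ | p.Prime ∧ ε (p : ZMod q) = ξ ∧ f p = -1}, ((p : ℕ) : ℂ) ^ (-z) =
            (1 / (2 * ({ξ : ℂ | ∃ u : (ZMod q)ˣ, ε (u : ZMod q) = ξ}.ncard : ℝ)) : ℝ) *
              Complex.log (1 / (z - 1)) + h z)) :
    ∀ d : ℕ, Nat.Coprime d q →
      ∃ F : ℂ → ℂ, AnalyticOnNhd ℂ F {z : ℂ | 1 ≤ z.re} ∧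
        ∀ z : ℂ, 1 < z.re →
          F z = ∑' n : {n : ℕ // n ≡ d [MOD q]}, ((f n : ℂ)) / ((n : ℕ) : ℂ) ^ z :=
  progression_series_analytic_general q f hval hlog hreg
end

section
/- For coprime natural numbers d, q, the limit lim_{z→1⁺} (z−1)·∑_{n ≡ d (mod q), n ≥ 1} 1/n^z exists and equals 1/q. -/
open Filter Topology Finset

/-!
A residue class mod `q` contains `n / q + O(1)` of the integers in `[1, n]`, so it has natural
density `1 / q`. By partial (Abel) summation, natural density `l` forces
`(z - 1) * ∑ n⁻ᶻ → l` as `z → 1⁺`, which Mathlib provides for L-series with nonnegative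
coefficients.
-/

theorem Nat.abs_card_filter_modEq_Icc_sub_div_lt {q : ℕ} (hq : 0 < q) (d n : ℕ) :
    |(#{k ∈ Icc 1 n | k ≡ d [MOD q]} : ℝ) - n / q| < 1 := by
  have hcard := Nat.Ioc_filter_modEq_card 0 n hq d
  set x : ℚ := (n - d) / q
  set y : ℚ := ((0 : ℕ) - d) / q
  have hxy : x - y = n / q := by simp only [x, y]; ring
  have hyx : ⌊y⌋ ≤ ⌊x⌋ := Int.floor_mono (by simp only [x, y]; gcongr; simp)
  rw [max_eq_left (sub_nonneg.mpr hyx), ← Finset.Icc_succ_left_eq_Ioc] at hcard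
  have hcardℚ : (#{k ∈ Icc 1 n | k ≡ d [MOD q]} : ℚ) = ⌊x⌋ - ⌊y⌋ := by
    exact_mod_cast hcard
  have hℚ : |(#{k ∈ Icc 1 n | k ≡ d [MOD q]} : ℚ) - n / q| < 1 := by
    rw [hcardℚ, ← hxy, abs_lt]
    constructor <;> linarith [Int.floor_le x, Int.floor_le y, Int.lt_floor_add_one x,
      Int.lt_floor_add_one y]
  have := (Rat.cast_lt (K := ℝ)).mpr hℚ
  push_cast at this
  exact this

theorem Nat.tendsto_card_filter_modEq_Icc_div {q : ℕ} (hq : 0 < q) (d : ℕ) :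
    Tendsto (fun n : ℕ ↦ (#{k ∈ Icc 1 n | k ≡ d [MOD q]} : ℝ) / n) atTop (𝓝 (1 / q)) := by
  rw [tendsto_iff_norm_sub_tendsto_zero]
  refine squeeze_zero' (Eventually.of_forall fun n ↦ norm_nonneg _) ?_
    (tendsto_const_div_atTop_nhds_zero_nat 1)
  filter_upwards [eventually_gt_atTop 0] with n hn
  have hn' : (0 : ℝ) < n := by exact_mod_cast hn
  have hbound : |(#{k ∈ Icc 1 n | k ≡ d [MOD q]} : ℝ) - n / q| ≤ 1 :=
    (Nat.abs_card_filter_modEq_Icc_sub_div_lt hq d n).le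
  rw [Real.norm_eq_abs, show (#{k ∈ Icc 1 n | k ≡ d [MOD q]} : ℝ) / n - 1 / q
      = ((#{k ∈ Icc 1 n | k ≡ d [MOD q]} : ℝ) - n / q) / n by field_simp, abs_div,
    abs_of_pos hn']
  gcongr

theorem LSeries_boole_eq_tsum_subtype_rpow (p : ℕ → Prop) [DecidablePred p] (z : ℝ) :
    LSeries (fun n ↦ ((if p n then 1 else 0 : ℝ) : ℂ)) z
      = ((∑' n : {n : ℕ // 1 ≤ n ∧ p n}, (n : ℝ) ^ (-z) : ℝ) : ℂ) := by
  rw [Complex.ofReal_tsum, LSeries]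
  refine Eq.trans ?_
    (_root_.tsum_subtype {n : ℕ | 1 ≤ n ∧ p n} (fun n : ℕ ↦ (((n : ℝ) ^ (-z) : ℝ) : ℂ))).symm
  refine tsum_congr fun n ↦ ?_
  rcases Nat.eq_zero_or_pos n with rfl | hn
  · simp
  · by_cases hp : p n <;>
      simp [hn.ne', hp, Set.indicator, Nat.one_le_iff_ne_zero, Real.rpow_neg, Complex.ofReal_cpow]

theorem tendsto_sub_mul_tsum_subtype_rpow_of_tendsto_card_filter_div (p : ℕ → Prop)
    [DecidablePred p] {l : ℝ}
    (hp : Tendsto (fun n : ℕ ↦ (#{k ∈ Icc 1 n | p k} : ℝ) / n) atTop (𝓝 l)) :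
    Tendsto (fun z : ℝ ↦ (z - 1) * ∑' n : {n : ℕ // 1 ≤ n ∧ p n}, (n : ℝ) ^ (-z))
      (𝓝[>] 1) (𝓝 l) := by
  have hL := LSeries_tendsto_sub_mul_nhds_one_of_tendsto_sum_div_and_nonneg
    (fun n ↦ if p n then 1 else 0) (by simpa only [Finset.sum_boole] using hp)
    (fun n ↦ by positivity)
  rw [← tendsto_ofReal_iff]
  simpa only [LSeries_boole_eq_tsum_subtype_rpow, Complex.ofReal_mul, Complex.ofReal_sub,
    Complex.ofReal_one] using hL

theorem progression_dedekind_dirichlet_density_general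
    (q d : ℕ) (hq : 0 < q) :
    Tendsto
      (fun z : ℝ => (z - 1) *
        ∑' n : {n : ℕ // 1 ≤ n ∧ n ≡ d [MOD q]}, ((n : ℕ) : ℝ) ^ (-z))
      (𝓝[>] (1 : ℝ)) (𝓝 (1 / (q : ℝ))) :=
  tendsto_sub_mul_tsum_subtype_rpow_of_tendsto_card_filter_div _
    (Nat.tendsto_card_filter_modEq_Icc_div hq d)

/-- The arithmetic progression `{n ≥ 1 : n ≡ d (mod q)}` with `gcd(d,q) = 1` has
Dedekind–Dirichlet density `1/q`. -/
theorem progression_dedekind_dirichlet_density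
    (q d : ℕ) (hq : 0 < q) (hd : Nat.Coprime d q) :
    Tendsto
      (fun z : ℝ => (z - 1) *
        ∑' n : {n : ℕ // 1 ≤ n ∧ n ≡ d [MOD q]}, ((n : ℕ) : ℝ) ^ (-z))
      (𝓝[>] (1 : ℝ)) (𝓝 (1 / (q : ℝ))) :=
  progression_dedekind_dirichlet_density_general q d hq
end

section
/- Let χ₀ be the principal Dirichlet character modulo N, let q be a natural number with q = N or gcd(q,N) = 1, and let d be coprime to q. Then the set {n ∈ ℕ : gcd(n,N) = 1, n ≡ d (mod q)} has a Dedekind–Dirichlet density, and it equals (1/q)·∏_{p | N, p ∤ q} (1 − 1/p). -/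
open Filter Topology Finset

lemma real_zeta_residue :
    Tendsto (fun z : ℝ => (z - 1) * ∑' n : ℕ, (n : ℝ) ^ (-z)) (𝓝[>] (1:ℝ)) (𝓝 1) := by
  have hmap : Tendsto (fun z : ℝ => (z : ℂ)) (𝓝[>] (1:ℝ)) (𝓝[≠] (1:ℂ)) := by
    apply tendsto_nhdsWithin_of_tendsto_nhds_of_eventually_within
    · exact (Complex.continuous_ofReal.tendsto 1).mono_left nhdsWithin_le_nhds
    · filter_upwards [self_mem_nhdsWithin] with z hz
      simp only [Set.mem_compl_iff, Set.mem_singleton_iff]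
      exact_mod_cast ne_of_gt (hz : (1:ℝ) < z)
  have h2 : Tendsto (fun z : ℝ => ((z:ℂ) - 1) * riemannZeta (z:ℂ)) (𝓝[>] (1:ℝ)) (𝓝 1) :=
    riemannZeta_residue_one.comp hmap
  have h3 : Tendsto (fun z : ℝ => (((z:ℂ) - 1) * riemannZeta (z:ℂ)).re) (𝓝[>] (1:ℝ))
      (𝓝 1) := by
    have := (Complex.continuous_re.tendsto 1).comp h2
    exact this
  refine h3.congr' ?_
  filter_upwards [self_mem_nhdsWithin] with z hz
  have hz1 : 1 < z := hz
  have hzeta : riemannZeta (z:ℂ) = ((∑' n : ℕ, (n : ℝ) ^ (-z) : ℝ) : ℂ) := by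
    rw [zeta_eq_tsum_one_div_nat_cpow (by simpa using hz1), Complex.ofReal_tsum]
    congr 1
    funext n
    rw [Real.rpow_neg (by positivity), Complex.ofReal_inv, one_div,
      Complex.ofReal_cpow (by positivity), Complex.ofReal_natCast]
  rw [hzeta, ← Complex.ofReal_one, ← Complex.ofReal_sub, ← Complex.ofReal_mul,
    Complex.ofReal_re]

lemma summable_shift (z : ℝ) (hz : 1 < z) (r M : ℕ) (hM : 0 < M) :
    Summable (fun k : ℕ => ((r + k * M : ℕ) : ℝ) ^ (-z)) := by
  have hsum : Summable (fun n : ℕ => (n : ℝ) ^ (-z)) :=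
    Real.summable_nat_rpow.mpr (by linarith)
  have hinj : Function.Injective (fun k : ℕ => r + k * M) := by
    intro a b hab
    simp only at hab
    exact Nat.eq_of_mul_eq_mul_right hM (by omega)
  exact hsum.comp_injective hinj

lemma tendsto_M_rpow (M : ℕ) (hM : 0 < M) :
    Tendsto (fun z : ℝ => (M : ℝ) ^ (-z)) (𝓝[>] (1:ℝ)) (𝓝 (1 / (M:ℝ))) := by
  have h : ContinuousAt (fun z : ℝ => (M : ℝ) ^ (-z)) 1 :=
    (Real.continuousAt_const_rpow (by positivity)).comp (continuous_neg.continuousAt)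
  have h2 : Tendsto (fun z : ℝ => (M : ℝ) ^ (-z)) (𝓝[>] (1:ℝ)) (𝓝 ((M:ℝ) ^ (-(1:ℝ)))) :=
    h.tendsto.mono_left nhdsWithin_le_nhds
  simpa [Real.rpow_neg_one, one_div] using h2

lemma class_residue (M : ℕ) (hM : 0 < M) (r : ℕ) (hr : r ≤ M) :
    Tendsto (fun z : ℝ => (z - 1) * ∑' k : ℕ, ((r + k * M : ℕ) : ℝ) ^ (-z))
      (𝓝[>] (1:ℝ)) (𝓝 (1 / (M:ℝ))) := by
  have hL : Tendsto (fun z : ℝ => (M : ℝ) ^ (-z) * ((z - 1) * ∑' n : ℕ, (n : ℝ) ^ (-z)))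
      (𝓝[>] (1:ℝ)) (𝓝 (1 / (M:ℝ))) := by
    simpa using (tendsto_M_rpow M hM).mul real_zeta_residue
  have hMzeq : ∀ z : ℝ, 1 < z →
      (M : ℝ) ^ (-z) * ∑' n : ℕ, (n : ℝ) ^ (-z) = ∑' k : ℕ, (((k+1) * M : ℕ) : ℝ) ^ (-z) := by
    intro z hz
    have hsum : Summable (fun n : ℕ => (n : ℝ) ^ (-z)) :=
      Real.summable_nat_rpow.mpr (by linarith)
    rw [← tsum_mul_left, Summable.tsum_eq_zero_add (hsum.mul_left ((M:ℝ)^(-z)))]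
    rw [Nat.cast_zero, Real.zero_rpow (by linarith), mul_zero, zero_add]
    congr 1
    funext k
    push_cast
    rw [← Real.mul_rpow (by positivity) (by positivity), mul_comm]
  rcases Nat.eq_zero_or_pos r with hr0 | hrpos
  · subst hr0
    refine hL.congr' ?_
    filter_upwards [self_mem_nhdsWithin] with z hz
    have hz1 : 1 < z := hz
    rw [mul_comm ((M:ℝ)^(-z)), mul_assoc]
    congr 1
    rw [← tsum_mul_right]
    congr 1
    funext k
    push_cast
    rw [zero_add, ← Real.mul_rpow (by positivity) (by positivity)]
  · -- squeeze
    have hU : Tendsto (fun z : ℝ => (z - 1) +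
        (M : ℝ) ^ (-z) * ((z - 1) * ∑' n : ℕ, (n : ℝ) ^ (-z)))
        (𝓝[>] (1:ℝ)) (𝓝 (1 / (M:ℝ))) := by
      have h0 : Tendsto (fun z : ℝ => z - 1) (𝓝[>] (1:ℝ)) (𝓝 0) := by
        have h0' : Tendsto (fun z : ℝ => z - 1) (𝓝 (1:ℝ)) (𝓝 (1 - 1)) :=
          (continuous_id.sub continuous_const).tendsto 1
        simpa using h0'.mono_left nhdsWithin_le_nhds
      simpa using h0.add hL
    refine tendsto_of_tendsto_of_tendsto_of_le_of_le' hL hU ?_ ?_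
    · filter_upwards [self_mem_nhdsWithin] with z hz
      have hz1 : 1 < z := hz
      have hf := summable_shift z hz1 r M hM
      have hg' : Summable (fun k : ℕ => (((k+1) * M : ℕ) : ℝ) ^ (-z)) := by
        have h := (summable_nat_add_iff 1).mpr (summable_shift z hz1 0 M hM)
        refine h.congr fun k => ?_
        congr 2
        omega
      have hle : ∑' k : ℕ, (((k+1) * M : ℕ) : ℝ) ^ (-z)
          ≤ ∑' k : ℕ, ((r + k * M : ℕ) : ℝ) ^ (-z) := by
        refine Summable.tsum_le_tsum (fun k => ?_) hg' hf
        apply Real.rpow_le_rpow_of_nonpos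
        · have h1 : 0 < r + k * M := Nat.lt_of_lt_of_le hrpos (Nat.le_add_right _ _)
          exact_mod_cast h1
        · have h2 : r + k * M ≤ (k + 1) * M := by
            have := Nat.add_le_add_right hr (k * M)
            simpa [Nat.succ_mul, Nat.add_comm] using this
          exact_mod_cast h2
        · linarith
      calc (M:ℝ) ^ (-z) * ((z - 1) * ∑' n : ℕ, (n : ℝ) ^ (-z))
          = (z - 1) * ((M:ℝ) ^ (-z) * ∑' n : ℕ, (n : ℝ) ^ (-z)) := by ring
        _ = (z - 1) * ∑' k : ℕ, (((k+1) * M : ℕ) : ℝ) ^ (-z) := by rw [hMzeq z hz1]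
        _ ≤ _ := mul_le_mul_of_nonneg_left hle (by linarith)
    · filter_upwards [self_mem_nhdsWithin] with z hz
      have hz1 : 1 < z := hz
      have hf := summable_shift z hz1 r M hM
      have hg' : Summable (fun k : ℕ => (((k+1) * M : ℕ) : ℝ) ^ (-z)) := by
        have h := (summable_nat_add_iff 1).mpr (summable_shift z hz1 0 M hM)
        refine h.congr fun k => ?_
        congr 2
        omega
      have hsplit : ∑' k : ℕ, ((r + k * M : ℕ) : ℝ) ^ (-z)
          = ((r + 0 * M : ℕ) : ℝ) ^ (-z) + ∑' k : ℕ, ((r + (k+1) * M : ℕ) : ℝ) ^ (-z) :=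
        Summable.tsum_eq_zero_add hf
      have h1 : ((r + 0 * M : ℕ) : ℝ) ^ (-z) ≤ 1 := by
        apply Real.rpow_le_one_of_one_le_of_nonpos
        · exact_mod_cast Nat.one_le_iff_ne_zero.mpr (by omega)
        · linarith
      have hbound : ∑' k : ℕ, ((r + (k+1) * M : ℕ) : ℝ) ^ (-z)
          ≤ ∑' k : ℕ, (((k+1) * M : ℕ) : ℝ) ^ (-z) := by
        refine Summable.tsum_le_tsum (fun k => ?_) ((summable_nat_add_iff 1).mpr hf) hg'
        apply Real.rpow_le_rpow_of_nonpos
        · exact_mod_cast Nat.mul_pos (Nat.succ_pos k) hM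
        · exact_mod_cast Nat.le_add_left _ _
        · linarith
      have hT : ∑' k : ℕ, ((r + k * M : ℕ) : ℝ) ^ (-z)
          ≤ 1 + ∑' k : ℕ, (((k+1) * M : ℕ) : ℝ) ^ (-z) := by
        rw [hsplit]; exact add_le_add h1 hbound
      calc (z - 1) * ∑' k : ℕ, ((r + k * M : ℕ) : ℝ) ^ (-z)
          ≤ (z - 1) * (1 + ∑' k : ℕ, (((k+1) * M : ℕ) : ℝ) ^ (-z)) :=
            mul_le_mul_of_nonneg_left hT (by linarith)
        _ = (z - 1) + (z - 1) * ((M:ℝ) ^ (-z) * ∑' n : ℕ, (n : ℝ) ^ (-z)) := by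
            rw [hMzeq z hz1]; ring
        _ = _ := by ring

def classEquiv (M : ℕ) (hM : 0 < M) (P : ℕ → Prop) [DecidablePred P]
    (hper : ∀ n : ℕ, P (n % M) ↔ P n) :
    {r : ℕ // r ∈ (range M).filter P} × ℕ ≃ {n : ℕ // P n} where
  toFun := fun p => ⟨(p.1 : ℕ) + p.2 * M, by
    have hrP : P (p.1 : ℕ) := (mem_filter.mp p.1.2).2
    have hlt : (p.1 : ℕ) < M := mem_range.mp (mem_filter.mp p.1.2).1
    have hmod : ((p.1 : ℕ) + p.2 * M) % M = (p.1 : ℕ) := by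
      rw [Nat.add_mul_mod_self_right, Nat.mod_eq_of_lt hlt]
    rw [← hper, hmod]
    exact hrP⟩
  invFun := fun n => (⟨(n : ℕ) % M, mem_filter.mpr
      ⟨mem_range.mpr (Nat.mod_lt _ hM), (hper _).mpr n.2⟩⟩, (n : ℕ) / M)
  left_inv := by
    rintro ⟨⟨r, hrm⟩, k⟩
    have hlt : r < M := mem_range.mp (mem_filter.mp hrm).1
    have h1 : (r + k * M) % M = r := by
      rw [Nat.add_mul_mod_self_right, Nat.mod_eq_of_lt hlt]
    have h2 : (r + k * M) / M = k := by
      rw [Nat.add_mul_div_right _ _ hM, Nat.div_eq_of_lt hlt, Nat.zero_add]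
    exact Prod.ext (Subtype.ext h1) h2
  right_inv := by
    rintro ⟨n, hn⟩
    exact Subtype.ext (Nat.mod_add_div' n M)

lemma density_of_periodic (M : ℕ) (hM : 0 < M) (P : ℕ → Prop) [DecidablePred P]
    (hper : ∀ n : ℕ, P (n % M) ↔ P n) :
    Tendsto (fun z : ℝ => (z - 1) * ∑' n : {n : ℕ // P n}, ((n : ℕ) : ℝ) ^ (-z))
      (𝓝[>] (1 : ℝ))
      (𝓝 ((((range M).filter P).card : ℝ) / M)) := by
  set R := (range M).filter P with hR
  have key : ∀ᶠ z in 𝓝[>] (1:ℝ),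
      (z - 1) * ∑' n : {n : ℕ // P n}, ((n : ℕ) : ℝ) ^ (-z)
      = ∑ r ∈ R, ((z - 1) * ∑' k : ℕ, ((r + k * M : ℕ) : ℝ) ^ (-z)) := by
    filter_upwards [self_mem_nhdsWithin] with z hz
    have hz1 : 1 < z := hz
    have hsum : Summable (fun n : ℕ => (n : ℝ) ^ (-z)) :=
      Real.summable_nat_rpow.mpr (by linarith)
    have hsub : Summable (fun n : {n : ℕ // P n} => ((n : ℕ) : ℝ) ^ (-z)) :=
      hsum.subtype _
    have hE : Summable (fun p : {r : ℕ // r ∈ R} × ℕ =>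
        (((classEquiv M hM P hper) p : ℕ) : ℝ) ^ (-z)) :=
      ((classEquiv M hM P hper).summable_iff).mpr hsub
    rw [← (classEquiv M hM P hper).tsum_eq, Summable.tsum_prod hE]
    have heq : ∀ a : {r : ℕ // r ∈ R}, ∑' k : ℕ,
        (((classEquiv M hM P hper) (a, k) : ℕ) : ℝ) ^ (-z)
        = ∑' k : ℕ, (((a : ℕ) + k * M : ℕ) : ℝ) ^ (-z) := fun a => rfl
    simp_rw [heq]
    rw [Finset.tsum_subtype R (fun r => ∑' k : ℕ, ((r + k * M : ℕ) : ℝ) ^ (-z)),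
      Finset.mul_sum]
  have hsumlim : Tendsto (fun z : ℝ =>
      ∑ r ∈ R, ((z - 1) * ∑' k : ℕ, ((r + k * M : ℕ) : ℝ) ^ (-z)))
      (𝓝[>] (1:ℝ)) (𝓝 (∑ _r ∈ R, 1 / (M:ℝ))) := by
    refine tendsto_finset_sum _ fun r hr => ?_
    exact class_residue M hM r (le_of_lt (mem_range.mp (mem_filter.mp hr).1))
  have : (∑ _r ∈ R, 1 / (M:ℝ)) = (R.card : ℝ) / M := by
    rw [Finset.sum_const, nsmul_eq_mul]
    ring
  rw [this] at hsumlim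
  exact hsumlim.congr' (EventuallyEq.symm key)

lemma gcd_mod_left' (a n : ℕ) : Nat.gcd (a % n) n = Nat.gcd a n := by
  exact (Nat.gcd_rec n a).symm.trans (Nat.gcd_comm n a)

lemma gcd_eq_of_modEq' {a b n : ℕ} (h : a ≡ b [MOD n]) :
    Nat.gcd a n = Nat.gcd b n := by
  rw [← gcd_mod_left' a n, ← gcd_mod_left' b n, h]

/-- If `q = N` or `gcd(q,N) = 1`, the set `{n : gcd(n,N) = 1, n ≡ d (mod q)}` has a
Dedekind–Dirichlet density, equal to `(1/q)·∏_{p ∣ N, p ∤ q} (1 - 1/p)`. -/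
theorem coprime_progression_dedekind_dirichlet_density
    (N q d : ℕ) (hN : 0 < N) (hq : 0 < q)
    (hqN : q = N ∨ Nat.Coprime q N) (hd : Nat.Coprime d q) :
    Tendsto
      (fun z : ℝ => (z - 1) *
        ∑' n : {n : ℕ // Nat.gcd n N = 1 ∧ n ≡ d [MOD q]}, ((n : ℕ) : ℝ) ^ (-z))
      (𝓝[>] (1 : ℝ))
      (𝓝 ((1 / (q : ℝ)) *
        ∏ p ∈ N.primeFactors.filter (fun p => ¬ p ∣ q), (1 - 1 / (p : ℝ)))) := by
  classical
  rcases hqN with rfl | hco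
  · -- case q = N
    have hper : ∀ n : ℕ, (Nat.gcd (n % q) q = 1 ∧ n % q ≡ d [MOD q])
        ↔ (Nat.gcd n q = 1 ∧ n ≡ d [MOD q]) := by
      intro n
      rw [gcd_mod_left']
      have h : (n % q ≡ d [MOD q]) ↔ (n ≡ d [MOD q]) :=
        ⟨fun h => (Nat.mod_modEq n q).symm.trans h, fun h => (Nat.mod_modEq n q).trans h⟩
      rw [h]
    have hDP := density_of_periodic q hq
        (fun n => Nat.gcd n q = 1 ∧ n ≡ d [MOD q]) hper
    have hfilter : (range q).filter (fun n => Nat.gcd n q = 1 ∧ n ≡ d [MOD q])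
        = {d % q} := by
      ext r
      simp only [mem_filter, mem_range, mem_singleton]
      constructor
      · rintro ⟨hr, -, hmod⟩
        rw [← Nat.mod_eq_of_lt hr]
        exact hmod
      · rintro rfl
        refine ⟨Nat.mod_lt _ hq, ?_, Nat.mod_modEq d q⟩
        rw [gcd_mod_left']
        exact hd
    have hprod : (q : ℕ).primeFactors.filter (fun p => ¬ p ∣ q) = ∅ := by
      refine Finset.filter_false_of_mem fun p hp => ?_
      simp only [not_not]
      exact Nat.dvd_of_mem_primeFactors hp
    rw [hprod, Finset.prod_empty, mul_one]
    rw [hfilter, Finset.card_singleton] at hDP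
    simpa using hDP
  · -- case coprime
    have hco' : N.Coprime q := Nat.coprime_comm.mp hco
    have hNq : 0 < N * q := Nat.mul_pos hN hq
    have hper : ∀ n : ℕ, (Nat.gcd (n % (N * q)) N = 1 ∧ n % (N * q) ≡ d [MOD q])
        ↔ (Nat.gcd n N = 1 ∧ n ≡ d [MOD q]) := by
      intro n
      have h1 : n % (N * q) ≡ n [MOD N] :=
        (Nat.mod_modEq n (N * q)).of_dvd ⟨q, rfl⟩
      have h2 : n % (N * q) ≡ n [MOD q] :=
        (Nat.mod_modEq n (N * q)).of_dvd ⟨N, mul_comm N q⟩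
      rw [gcd_eq_of_modEq' h1]
      exact and_congr_right fun _ =>
        ⟨fun h => h2.symm.trans h, fun h => h2.trans h⟩
    have hDP := density_of_periodic (N * q) hNq
        (fun n => Nat.gcd n N = 1 ∧ n ≡ d [MOD q]) hper
    -- counting
    have hcard : ((range (N * q)).filter
        (fun n => Nat.gcd n N = 1 ∧ n ≡ d [MOD q])).card = N.totient := by
      rw [Nat.totient_eq_card_coprime]
      refine Finset.card_bij' (fun r _ => r % N)
        (fun a _ => (Nat.chineseRemainder hco' a d : ℕ)) ?_ ?_ ?_ ?_
      · intro r hr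
        simp only [mem_filter, mem_range] at hr ⊢
        refine ⟨Nat.mod_lt _ hN, ?_⟩
        have : Nat.gcd (r % N) N = 1 := by rw [gcd_mod_left']; exact hr.2.1
        rwa [Nat.Coprime, Nat.gcd_comm]
      · intro a ha
        simp only [mem_filter, mem_range] at ha ⊢
        obtain ⟨haN, haco⟩ := ha
        have hk := (Nat.chineseRemainder hco' a d).2
        refine ⟨Nat.chineseRemainder_lt_mul hco' a d hN.ne' hq.ne', ?_, hk.2⟩
        rw [gcd_eq_of_modEq' hk.1, ← Nat.mod_eq_of_lt haN, gcd_mod_left']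
        rwa [Nat.Coprime, Nat.gcd_comm] at haco
      · intro r hr
        simp only [mem_filter, mem_range] at hr
        obtain ⟨hrlt, -, hrd⟩ := hr
        have hk := (Nat.chineseRemainder hco' (r % N) d).2
        have hmN : (Nat.chineseRemainder hco' (r % N) d : ℕ) ≡ r [MOD N] :=
          hk.1.trans (Nat.mod_modEq r N)
        have hmq : (Nat.chineseRemainder hco' (r % N) d : ℕ) ≡ r [MOD q] :=
          hk.2.trans hrd.symm
        have hNq' : (Nat.chineseRemainder hco' (r % N) d : ℕ) ≡ r [MOD N * q] :=
          (Nat.modEq_and_modEq_iff_modEq_mul hco').mp ⟨hmN, hmq⟩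
        exact hNq'.eq_of_lt_of_lt
          (Nat.chineseRemainder_lt_mul hco' _ d hN.ne' hq.ne') hrlt
      · intro a ha
        simp only [mem_filter, mem_range] at ha
        have hk := (Nat.chineseRemainder hco' a d).2
        have h5 : (Nat.chineseRemainder hco' a d : ℕ) % N = a % N := hk.1
        show (Nat.chineseRemainder hco' a d : ℕ) % N = a
        rw [h5, Nat.mod_eq_of_lt ha.1]
    rw [hcard] at hDP
    -- value
    have hfilterAll : N.primeFactors.filter (fun p => ¬ p ∣ q) = N.primeFactors := by
      refine Finset.filter_true_of_mem fun p hp hpq => ?_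
      have hpN : p ∣ N := Nat.dvd_of_mem_primeFactors hp
      have : p ∣ Nat.gcd q N := Nat.dvd_gcd hpq hpN
      rw [hco] at this
      exact (Nat.Prime.ne_one (Nat.prime_of_mem_primeFactors hp))
        (Nat.eq_one_of_dvd_one this)
    have htot : (N.totient : ℝ) = N * ∏ p ∈ N.primeFactors, (1 - 1 / (p : ℝ)) := by
      have hQ := congrArg (fun x : ℚ => (x : ℝ)) (Nat.totient_eq_mul_prod_factors N)
      push_cast at hQ
      simpa [one_div] using hQ
    have hval : (1 / (q : ℝ)) * ∏ p ∈ N.primeFactors.filter (fun p => ¬ p ∣ q),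
        (1 - 1 / (p : ℝ)) = (N.totient : ℝ) / (N * q) := by
      rw [hfilterAll, htot]
      have hN' : (N : ℝ) ≠ 0 := Nat.cast_ne_zero.mpr hN.ne'
      have hq' : (q : ℝ) ≠ 0 := Nat.cast_ne_zero.mpr hq.ne'
      field_simp
    rw [hval]
    have : ((N * q : ℕ) : ℝ) = (N : ℝ) * q := by push_cast; ring
    rw [this] at hDP
    exact hDP
end
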